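/- arXiv:2102.06742 — 2 statements merged into one kernel-verified Lean document; each statement's English description precedes it below -/
import Mathlib

section
/- Special case of Shapley–Folkman for segments through the origin: given vectors a_1, ..., a_m ∈ ℝ^d and x ∈ ∑_i conv{0, a_i}, there exists ū ∈ [0,1]^m with x = ∑_i ū_i a_i and at most d indices i for which ū_i ∉ {0,1}. -/
/-!
The coefficient vectors `u ∈ [0,1]^m` with `∑ᵢ uᵢ aᵢ = x` form a nonempty compact convex set, so
by Krein–Milman it has an extreme point `u`. If the `aᵢ` with `uᵢ ∈ (0,1)` admitted a nontrivial
linear relation `c`, then `u ± s c` would stay in the set for small `s > 0`, exhibiting `u` as a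
midpoint. Hence these `aᵢ` are linearly independent, and there are at most `d` of them.
-/

open Finset Filter Topology Module
open scoped Pointwise

variable {ι E : Type*} [Fintype ι] [AddCommGroup E] [Module ℝ E]

noncomputable def fractionalIndices (u : ι → ℝ) : Finset ι := {i | u i ∈ Set.Ioo 0 1}

@[simp]
theorem mem_fractionalIndices {u : ι → ℝ} {i : ι} :
    i ∈ fractionalIndices u ↔ u i ∈ Set.Ioo 0 1 := by
  simp [fractionalIndices]

theorem eq_zero_or_eq_one_of_notMem_fractionalIndices {u : ι → ℝ} (hu : u ∈ Set.Icc 0 1) {i : ι}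
    (hi : i ∉ fractionalIndices u) : u i = 0 ∨ u i = 1 := by
  rw [mem_fractionalIndices, Set.mem_Ioo, not_and_or, not_lt, not_lt] at hi
  rcases hi with hi | hi
  · exact .inl (le_antisymm hi (hu.1 i))
  · exact .inr (le_antisymm (hu.2 i) hi)

theorem eventually_add_smul_mem_Icc {u c : ι → ℝ} (hu : u ∈ Set.Icc 0 1)
    (hc : ∀ i, c i ≠ 0 → u i ∈ Set.Ioo 0 1) : ∀ᶠ s in 𝓝 (0 : ℝ), u + s • c ∈ Set.Icc 0 1 := by
  simp_rw [← Set.pi_univ_Icc, Set.mem_univ_pi, eventually_all]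
  intro i
  by_cases hci : c i = 0
  · exact .of_forall fun s ↦ by simpa [hci] using ⟨hu.1 i, hu.2 i⟩
  · have hline : Tendsto (fun s : ℝ ↦ u i + s * c i) (𝓝 0) (𝓝 (u i)) :=
      (continuous_const.add (continuous_id.mul continuous_const)).tendsto' 0 (u i) (by simp)
    exact (hline.eventually (isOpen_Ioo.mem_nhds (hc i hci))).mono
      fun s hs ↦ Set.Ioo_subset_Icc_self hs

theorem exists_pos_add_sub_smul_mem_Icc {u c : ι → ℝ} (hu : u ∈ Set.Icc 0 1)
    (hc : ∀ i, c i ≠ 0 → u i ∈ Set.Ioo 0 1) :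
    ∃ s : ℝ, 0 < s ∧ u + s • c ∈ Set.Icc 0 1 ∧ u - s • c ∈ Set.Icc 0 1 := by
  have hadd := eventually_add_smul_mem_Icc hu hc
  have hsub : ∀ᶠ s in 𝓝 (0 : ℝ), u - s • c ∈ Set.Icc 0 1 := by
    simpa [sub_eq_add_neg] using (continuous_neg.tendsto' (0 : ℝ) 0 neg_zero).eventually hadd
  obtain ⟨s, ⟨hs_add, hs_sub⟩, hs⟩ :=
    ((hadd.and hsub).filter_mono nhdsWithin_le_nhds |>.and self_mem_nhdsWithin).exists
      (f := 𝓝[>] (0 : ℝ))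
  exact ⟨s, hs, hs_add, hs_sub⟩

def cubeFiber (a : ι → E) (x : E) : Set (ι → ℝ) :=
  Set.Icc 0 1 ∩ (fun u ↦ ∑ i, u i • a i) ⁻¹' {x}

theorem mem_cubeFiber {a : ι → E} {x : E} {u : ι → ℝ} :
    u ∈ cubeFiber a x ↔ u ∈ Set.Icc 0 1 ∧ ∑ i, u i • a i = x :=
  Iff.rfl

theorem isCompact_cubeFiber [TopologicalSpace E] [ContinuousAdd E] [ContinuousSMul ℝ E]
    [T1Space E] (a : ι → E) (x : E) : IsCompact (cubeFiber a x) :=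
  isCompact_Icc.inter_right (isClosed_singleton.preimage (by fun_prop))

theorem linearIndepOn_fractionalIndices_of_mem_extremePoints {a : ι → E} {x : E} {u : ι → ℝ}
    (hu : u ∈ (cubeFiber a x).extremePoints ℝ) : LinearIndepOn ℝ a (fractionalIndices u) := by
  classical
  rw [mem_extremePoints, mem_cubeFiber] at hu
  obtain ⟨⟨hu_Icc, hu_sum⟩, hu_ext⟩ := hu
  by_contra hdep
  obtain ⟨f, hf_sum, j, hj, hfj⟩ := not_linearIndepOn_finset_iff.1 hdep
  set c : ι → ℝ := fun i ↦ if i ∈ fractionalIndices u then f i else 0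
  have hc_sum : ∑ i, c i • a i = 0 := by
    simpa only [c, ite_smul, zero_smul, sum_ite_mem, univ_inter] using hf_sum
  have hc_supp : ∀ i, c i ≠ 0 → u i ∈ Set.Ioo 0 1 := fun i hi ↦ by
    by_contra h
    exact hi (if_neg (mt mem_fractionalIndices.1 h))
  have hmem : ∀ t : ℝ, u + t • c ∈ Set.Icc 0 1 → u + t • c ∈ cubeFiber a x := fun t ht ↦
    ⟨ht, by simp [add_smul, sum_add_distrib, mul_smul, ← smul_sum, hc_sum, hu_sum]⟩
  obtain ⟨s, hs, hs_add, hs_sub⟩ := exists_pos_add_sub_smul_mem_Icc hu_Icc hc_supp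
  rw [sub_eq_add_neg, ← neg_smul] at hs_sub
  have hsc : u + s • c = u := (hu_ext _ (hmem s hs_add) _ (hmem (-s) hs_sub)
    (by simpa [neg_smul, ← sub_eq_add_neg] using mem_openSegment_add_sub u (s • c))).1
  have hsfj : s * f j = 0 := by
    simpa only [Pi.add_apply, Pi.smul_apply, smul_eq_mul, c, if_pos hj, add_eq_left]
      using congrFun hsc j
  exact hfj ((mul_eq_zero.1 hsfj).resolve_left hs.ne')

theorem exists_card_fractionalIndices_le_finrank [TopologicalSpace E] [ContinuousAdd E]
    [ContinuousSMul ℝ E] [T1Space E] [FiniteDimensional ℝ E] (a : ι → E) {u₀ : ι → ℝ}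
    (hu₀ : u₀ ∈ Set.Icc 0 1) :
    ∃ u ∈ Set.Icc 0 1, ∑ i, u i • a i = ∑ i, u₀ i • a i ∧
      #(fractionalIndices u) ≤ finrank ℝ E := by
  obtain ⟨u, hu⟩ := (isCompact_cubeFiber a (∑ i, u₀ i • a i)).extremePoints_nonempty
    ⟨u₀, hu₀, rfl⟩
  obtain ⟨hu_Icc, hu_sum⟩ := extremePoints_subset hu
  refine ⟨u, hu_Icc, hu_sum, ?_⟩
  simpa only [coe_sort_coe, Fintype.card_coe] using
    (linearIndepOn_fractionalIndices_of_mem_extremePoints hu).fintype_card_le_finrank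

theorem exists_coeffs_of_mem_sum_segments (a : ι → E) {x : E}
    (hx : x ∈ ∑ i, convexHull ℝ ({0, a i} : Set E)) :
    ∃ u ∈ Set.Icc (0 : ι → ℝ) 1, x = ∑ i, u i • a i := by
  obtain ⟨y, hy, rfl⟩ := (Set.mem_fintype_sum _ _).1 hx
  have hseg : ∀ i, ∃ t ∈ Set.Icc (0 : ℝ) 1, t • a i = y i := fun i ↦ by
    simpa [convexHull_pair, segment_eq_image'] using hy i
  choose u hu hyu using hseg
  exact ⟨u, ⟨fun i ↦ (hu i).1, fun i ↦ (hu i).2⟩, by simp [hyu]⟩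

/-- Shapley–Folkman for segments through the origin: if
`x ∈ ∑ᵢ conv{0, aᵢ}`, then `x = ∑ᵢ ūᵢ aᵢ` for some `ū ∈ [0,1]^m` with at most
`d` indices `i` for which `ūᵢ ∉ {0,1}`. -/
theorem shapley_folkman_segments {d m : ℕ} (a : Fin m → (Fin d → ℝ))
    (x : Fin d → ℝ)
    (hx : x ∈ ∑ i, convexHull ℝ ({0, a i} : Set (Fin d → ℝ))) :
    ∃ u : Fin m → ℝ, (∀ i, u i ∈ Set.Icc (0 : ℝ) 1) ∧
      x = ∑ i, u i • a i ∧
      ∃ T : Finset (Fin m), T.card ≤ d ∧ ∀ i ∉ T, u i = 0 ∨ u i = 1 := by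
  obtain ⟨u₀, hu₀, rfl⟩ := exists_coeffs_of_mem_sum_segments a hx
  obtain ⟨u, hu, hsum, hcard⟩ := exists_card_fractionalIndices_le_finrank a hu₀
  refine ⟨u, fun i ↦ ⟨hu.1 i, hu.2 i⟩, hsum.symm, fractionalIndices u, ?_,
    fun i hi ↦ eq_zero_or_eq_one_of_notMem_fractionalIndices hu hi⟩
  simpa using hcard
end

section
/- Perturbation sandwich bound: consider p(δ) := inf { f(z) : Xw = z + δ, w ∈ C } for a constraint set C ⊆ ℝ^m, and a rank-r approximation X = X_r + ΔX. If w*_r attains p_r(0) (the problem with X_r) with Lagrange dual variable ν*_r for the equality constraint, and w*, ν* attain the problem with X, then p(0) − ν*ᵀ ΔX w*_r ≤ p_r(0) ≤ p(0) − ν*_rᵀ ΔX w*, assuming weak duality holds with the stated multipliers. -/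
open Matrix

/-! A minimiser `w*_r` of the `X_r`-problem is feasible for the `X`-problem once the constraint is
shifted by `δ = ΔX w*_r`, since `X w*_r − ΔX w*_r = X_r w*_r`; hence `p(ΔX w*_r) ≤ p_r(0)`, and weak
duality `p(0) − νᵀδ ≤ p(δ)` gives the lower bound. Writing `X_r = X + (−ΔX)` and exchanging the two
problems gives the upper bound in the same way. -/

section PerturbedValue

variable {ι κ : Type*} [Fintype κ] (f : (ι → ℝ) → ℝ) (C : Set (κ → ℝ))

noncomputable def perturbedValue (A : Matrix ι κ ℝ) (δ : ι → ℝ) : ℝ :=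
  sInf {t : ℝ | ∃ w ∈ C, t = f (A *ᵥ w - δ)}

variable {f C}

theorem perturbedValue_le {A : Matrix ι κ ℝ} {δ : ι → ℝ}
    (hbdd : BddBelow {t : ℝ | ∃ w ∈ C, t = f (A *ᵥ w - δ)}) {w : κ → ℝ} (hw : w ∈ C) :
    perturbedValue f C A δ ≤ f (A *ᵥ w - δ) :=
  csInf_le hbdd ⟨w, hw, rfl⟩

theorem perturbedValue_le_of_eq_add {A B Δ : Matrix ι κ ℝ} (hA : A = B + Δ)
    (hbdd : ∀ δ, BddBelow {t : ℝ | ∃ w ∈ C, t = f (A *ᵥ w - δ)}) {w : κ → ℝ} (hw : w ∈ C) :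
    perturbedValue f C A (Δ *ᵥ w) ≤ f (B *ᵥ w) := by
  simpa only [hA, add_mulVec, add_sub_cancel_right] using
    perturbedValue_le (δ := Δ *ᵥ w) (hbdd _) hw

theorem perturbedValue_zero_sub_dotProduct_le [Fintype ι] {A B Δ : Matrix ι κ ℝ}
    (hA : A = B + Δ) (hbdd : ∀ δ, BddBelow {t : ℝ | ∃ w ∈ C, t = f (A *ᵥ w - δ)})
    {ν : ι → ℝ} (hdual : ∀ δ, perturbedValue f C A 0 - ν ⬝ᵥ δ ≤ perturbedValue f C A δ)
    {w : κ → ℝ} (hw : w ∈ C) :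
    perturbedValue f C A 0 - ν ⬝ᵥ (Δ *ᵥ w) ≤ f (B *ᵥ w) :=
  (hdual _).trans (perturbedValue_le_of_eq_add hA hbdd hw)

end PerturbedValue

/-- Perturbation sandwich bound. With `p(δ) = inf {f(z) : Xw = z + δ, w ∈ C}`
and `p_r(δ)` the analogous value for the rank-`r` part `X_r` of
`X = X_r + ΔX`: if `w*_r` attains `p_r(0)` with dual variable `ν*_r`
(weak duality in the perturbation: `p_r(δ) ≥ p_r(0) − ν*_rᵀδ`), and `w*, ν*`
are the corresponding solutions for `X`, then
`p(0) − ν*ᵀ ΔX w*_r ≤ p_r(0) ≤ p(0) − ν*_rᵀ ΔX w*`. -/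
theorem perturbation_sandwich {n m : ℕ}
    (f : (Fin n → ℝ) → ℝ) (C : Set (Fin m → ℝ))
    (X Xr ΔX : Matrix (Fin n) (Fin m) ℝ) (hX : X = Xr + ΔX)
    -- the perturbed optimal values (z = Xw − δ along the equality constraint)
    (p pr : (Fin n → ℝ) → ℝ)
    (hp : ∀ δ, p δ = sInf {t : ℝ | ∃ w ∈ C, t = f (X.mulVec w - δ)})
    (hpr : ∀ δ, pr δ = sInf {t : ℝ | ∃ w ∈ C, t = f (Xr.mulVec w - δ)})
    (hbddp : ∀ δ, BddBelow {t : ℝ | ∃ w ∈ C, t = f (X.mulVec w - δ)})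
    (hbddpr : ∀ δ, BddBelow {t : ℝ | ∃ w ∈ C, t = f (Xr.mulVec w - δ)})
    -- primal attainment
    (wr : Fin m → ℝ) (hwr : wr ∈ C) (hwropt : pr 0 = f (Xr.mulVec wr))
    (w : Fin m → ℝ) (hw : w ∈ C) (hwopt : p 0 = f (X.mulVec w))
    -- weak duality with the stated multipliers
    (ν νr : Fin n → ℝ)
    (hdual : ∀ δ, p 0 - ν ⬝ᵥ δ ≤ p δ)
    (hdualr : ∀ δ, pr 0 - νr ⬝ᵥ δ ≤ pr δ) :
    p 0 - ν ⬝ᵥ ΔX.mulVec wr ≤ pr 0 ∧ pr 0 ≤ p 0 - νr ⬝ᵥ ΔX.mulVec w := by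
  obtain rfl : p = perturbedValue f C X := funext hp
  obtain rfl : pr = perturbedValue f C Xr := funext hpr
  constructor
  · rw [hwropt]
    exact perturbedValue_zero_sub_dotProduct_le hX hbddp hdual hwr
  · have hXr : Xr = X + -ΔX := by rw [hX, add_neg_cancel_right]
    have hupper := perturbedValue_zero_sub_dotProduct_le hXr hbddpr hdualr hw
    rw [← hwopt, neg_mulVec, dotProduct_neg, sub_neg_eq_add] at hupper
    linarith
end
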